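/- Let T be a rooted tree and T' a proper rooted subtree of T with the same root (i.e., V(T') ⊊ V(T) and T' is a subtree of T containing the root). Then τ(S(T'), x) > τ(S(T), x) for all x > 0, where S(·) denotes the subdivision tree rooted at the image of the root. -/

import Mathlib

/-- A rooted tree: a root node together with a list of branches (rooted subtrees). -/
inductive RTree : Type
  | node : List RTree → RTree

namespace RTree

/-- Auxiliary fold: from the list of pairs `(M0 Tᵢ x, M Tᵢ x)` of the branches,
compute `(∏ᵢ M(Tᵢ,x), Σⱼ M0(Tⱼ,x) ∏_{i≠j} M(Tᵢ,x))`. -/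
def comb : List (ℝ × ℝ) → ℝ × ℝ
  | [] => (1, 0)
  | (m0, m) :: rest =>
    let pr := comb rest
    (m * pr.1, m0 * pr.1 + m * pr.2)

/-- `MM T x = (M₀(T,x), M₁(T,x))`: generating functions of matchings of `T`
not saturating / saturating the root. -/
def MM : RTree → ℝ → ℝ × ℝ
  | .node ts, x =>
    let pr := comb (ts.attach.map fun t =>
      let q := MM t.1 x
      (q.1, q.1 + q.2))
    (pr.1, x * pr.2)
  decreasing_by have := List.sizeOf_lt_of_mem t.2; simp only [RTree.node.sizeOf_spec]; omega

/-- Generating function of matchings not saturating the root. -/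
def M0 (t : RTree) (x : ℝ) : ℝ := (MM t x).1

/-- Generating function of matchings saturating the root. -/
def M1 (t : RTree) (x : ℝ) : ℝ := (MM t x).2

/-- The matching generating function `M(T,x) = M₀(T,x) + M₁(T,x)`. -/
def M (t : RTree) (x : ℝ) : ℝ := M0 t x + M1 t x

/-- `τ(T,x) = M₀(T,x)/M(T,x)`. -/
noncomputable def tau (t : RTree) (x : ℝ) : ℝ := M0 t x / M t x

/-- The subdivision tree: insert a new vertex in every edge. -/
def subdiv : RTree → RTree
  | .node ts => .node (ts.attach.map fun t => .node [subdiv t.1])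
  decreasing_by have := List.sizeOf_lt_of_mem t.2; simp only [RTree.node.sizeOf_spec]; omega

/-- Number of vertices. -/
def order : RTree → ℕ
  | .node ts => 1 + (ts.attach.map fun t => order t.1).sum
  decreasing_by have := List.sizeOf_lt_of_mem t.2; simp only [RTree.node.sizeOf_spec]; omega

end RTree

namespace RTree

/-- `IsSub T' T`: `T'` is a rooted subtree of `T` with the same root, i.e. the
branches of `T'` are rooted subtrees of a sublist of the branches of `T`. -/
inductive IsSub : RTree → RTree → Prop
  | node {ts' sub ts : List RTree} (hsub : sub.Sublist ts)
      (h : List.Forall₂ IsSub ts' sub) : IsSub (.node ts') (.node ts)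

end RTree

/-!
For `x > 0` the recursion for matchings at the root gives
`τ(T, x) = 1 / (1 + x Σᵢ τ(Tᵢ, x))` over the branches `Tᵢ` of `T`, and hence
`τ(S T, x) = 1 / (1 + x Σᵢ 1 / (1 + x τ(S Tᵢ, x)))`. By induction on `T`, passing to a rooted
subtree `T'` either changes nothing or strictly increases `τ(S ·, x)`: a branch that shrinks
strictly decreases its term `1 / (1 + x τ(S Tᵢ, x))`, and a branch that is dropped removes a
positive term. A subtree with fewer vertices is not `T` itself.
-/
theorem List.Sublist.eq_or_sum_map_lt {α M : Type*} [AddCommMonoid M] [PartialOrder M]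
    [IsOrderedCancelAddMonoid M] {f : α → M} {l₁ l₂ : List α} (h : l₁.Sublist l₂)
    (hf : ∀ a ∈ l₂, 0 < f a) : l₁ = l₂ ∨ (l₁.map f).sum < (l₂.map f).sum := by
  induction h with
  | slnil => exact .inl rfl
  | @cons l₁ l₂ a hsub _ =>
    refine .inr ?_
    rw [List.forall_mem_cons] at hf
    calc (l₁.map f).sum ≤ (l₂.map f).sum :=
          (hsub.map f).sum_le_sum (by simpa using fun a ha => (hf.2 a ha).le)
      _ < f a + (l₂.map f).sum := lt_add_of_pos_left _ hf.1
      _ = ((a :: l₂).map f).sum := by simp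
  | cons_cons a _ ih =>
    rw [List.forall_mem_cons] at hf
    simpa using ih hf.2

theorem List.Forall₂.eq_or_sum_map_lt {α M : Type*} [AddCommMonoid M] [PartialOrder M]
    [IsOrderedCancelAddMonoid M] {R : α → α → Prop} {f : α → M} {l₁ l₂ : List α}
    (h : List.Forall₂ R l₁ l₂) (hR : ∀ a b, R a b → b ∈ l₂ → a = b ∨ f a < f b) :
    l₁ = l₂ ∨ (l₁.map f).sum < (l₂.map f).sum := by
  induction h with
  | nil => exact .inl rfl
  | @cons a b l₁ l₂ hab _ ih =>
    have hhead := hR a b hab List.mem_cons_self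
    have htail := ih fun c d hcd hd => hR c d hcd (List.mem_cons_of_mem _ hd)
    simp only [List.map_cons, List.sum_cons]
    rcases hhead with rfl | hhead
    · exact htail.imp (congrArg _) (add_lt_add_right · (f a))
    · exact .inr (add_lt_add_of_lt_of_le hhead (htail.elim (fun h => h ▸ le_rfl) le_of_lt))

namespace RTree

@[elab_as_elim]
theorem induction_node {P : RTree → Prop} (t : RTree)
    (node : ∀ ts, (∀ t ∈ ts, P t) → P (.node ts)) : P t :=
  match t with
  | .node ts => node ts fun t _ => induction_node t node

theorem M0_node (ts : List RTree) (x : ℝ) :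
    M0 (.node ts) x = (comb (ts.map fun t => (M0 t x, M t x))).1 := by
  rw [M0, MM, List.attach_map_val (f := fun t => ((MM t x).1, (MM t x).1 + (MM t x).2))]
  rfl

theorem M1_node (ts : List RTree) (x : ℝ) :
    M1 (.node ts) x = x * (comb (ts.map fun t => (M0 t x, M t x))).2 := by
  rw [M1, MM, List.attach_map_val (f := fun t => ((MM t x).1, (MM t x).1 + (MM t x).2))]
  rfl

theorem subdiv_node (ts : List RTree) :
    subdiv (.node ts) = .node (ts.map fun t => .node [subdiv t]) := by
  rw [subdiv, List.attach_map_val (f := fun t => RTree.node [subdiv t])]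

theorem comb_fst (l : List (ℝ × ℝ)) : (comb l).1 = (l.map Prod.snd).prod := by
  induction l with
  | nil => rfl
  | cons p l ih => simp [comb, ih]

theorem comb_snd (l : List (ℝ × ℝ)) (h : ∀ p ∈ l, p.2 ≠ 0) :
    (comb l).2 = (comb l).1 * (l.map fun p => p.1 / p.2).sum := by
  induction l with
  | nil => simp [comb]
  | cons p l ih =>
    rw [List.forall_mem_cons] at h
    simp only [comb, List.map_cons, List.sum_cons, ih h.2]
    field_simp [h.1]

theorem M0_pos_and_M1_nonneg {x : ℝ} (hx : 0 < x) (t : RTree) : 0 < M0 t x ∧ 0 ≤ M1 t x := by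
  induction t using induction_node with
  | node ts ih =>
    have hM : ∀ t ∈ ts, 0 < M t x := fun t ht => add_pos_of_pos_of_nonneg (ih t ht).1 (ih t ht).2
    have hprod : 0 < (comb (ts.map fun t => (M0 t x, M t x))).1 := by
      rw [comb_fst, List.map_map]
      exact List.prod_pos (by simpa using hM)
    rw [M0_node, M1_node, comb_snd _ (by simpa using fun t ht => (hM t ht).ne')]
    refine ⟨hprod, mul_nonneg hx.le (mul_nonneg hprod.le (List.sum_nonneg ?_))⟩
    simp only [List.map_map, List.mem_map]
    rintro _ ⟨t, ht, rfl⟩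
    exact div_nonneg (ih t ht).1.le (hM t ht).le

theorem M_pos {x : ℝ} (hx : 0 < x) (t : RTree) : 0 < M t x :=
  let ⟨hM0, hM1⟩ := M0_pos_and_M1_nonneg hx t
  add_pos_of_pos_of_nonneg hM0 hM1

theorem tau_pos {x : ℝ} (hx : 0 < x) (t : RTree) : 0 < tau t x :=
  div_pos (M0_pos_and_M1_nonneg hx t).1 (M_pos hx t)

theorem tau_node {x : ℝ} (hx : 0 < x) (ts : List RTree) :
    tau (.node ts) x = (1 + x * (ts.map fun t => tau t x).sum)⁻¹ := by
  have hM0 : 0 < (comb (ts.map fun t => (M0 t x, M t x))).1 :=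
    M0_node ts x ▸ (M0_pos_and_M1_nonneg hx _).1
  rw [tau, M, M0_node, M1_node, comb_snd _ (by simpa using fun t _ => (M_pos hx t).ne'),
    List.map_map]
  field_simp
  rfl

theorem tau_subdiv_node {x : ℝ} (hx : 0 < x) (ts : List RTree) :
    tau (subdiv (.node ts)) x =
      (1 + x * (ts.map fun t => (1 + x * tau (subdiv t) x)⁻¹).sum)⁻¹ := by
  simp only [subdiv_node, tau_node hx, List.map_map, Function.comp_def, List.map_cons,
    List.map_nil, List.sum_singleton]

theorem eq_or_tau_subdiv_lt_of_isSub {x : ℝ} (hx : 0 < x) {T T' : RTree} (h : IsSub T' T) :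
    T' = T ∨ tau (subdiv T) x < tau (subdiv T') x := by
  induction T using induction_node generalizing T' with
  | node ts ih =>
    obtain @⟨ts', sub, _, hsub, hforall⟩ := h
    set g : RTree → ℝ := fun t => (1 + x * tau (subdiv t) x)⁻¹
    have one_add_pos (t : RTree) : 0 < 1 + x * tau (subdiv t) x := by
      have := tau_pos hx (subdiv t); positivity
    have hbranch := hforall.eq_or_sum_map_lt (f := g) fun a b hab hb =>
      (ih b (hsub.subset hb) hab).imp_right fun _ => inv_strictAnti₀ (one_add_pos b) (by gcongr)
    have hdrop := hsub.eq_or_sum_map_lt (f := g) fun t _ => inv_pos.2 (one_add_pos t)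
    have hsum : ts' = ts ∨ (ts'.map g).sum < (ts.map g).sum := by
      rcases hbranch with rfl | h₁ <;> rcases hdrop with rfl | h₂
      exacts [.inl rfl, .inr h₂, .inr h₁, .inr (h₁.trans h₂)]
    have hsum_nonneg : 0 ≤ (ts'.map g).sum :=
      List.sum_nonneg fun _ ha => by
        obtain ⟨t, _, rfl⟩ := List.mem_map.1 ha
        exact (inv_pos.2 (one_add_pos t)).le
    rw [tau_subdiv_node hx, tau_subdiv_node hx]
    exact hsum.imp (congrArg node) fun _ => inv_strictAnti₀ (by positivity) (by gcongr)

end RTree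

open RTree in
/-- Lemma 2.4: if `T'` is a proper rooted subtree of `T` with the same root,
then `τ(S(T'),x) > τ(S(T),x)` for all `x > 0`. -/
theorem tau_subdiv_lt_of_proper_subtree (T T' : RTree) (hsub : IsSub T' T)
    (hproper : T'.order < T.order) (x : ℝ) (hx : 0 < x) :
    tau (subdiv T) x < tau (subdiv T') x :=
  (eq_or_tau_subdiv_lt_of_isSub hx hsub).resolve_left fun h => (h ▸ hproper).false
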